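/- Let m < n and let E be a totally even edge set of the m × n grid. Then no edge of E is vertical crossing between rows m and m+1; that is, no edge of E joins a vertex (x, m) to (x, m+1). Moreover, the restriction of E to the subgrid {(x,y) : 1 ≤ x ≤ m, 1 ≤ y ≤ m} is a totally even edge set of that m × m subgrid, and the restriction of E to the translated subgrid {(x,y) : 1 ≤ x ≤ m, m+1 ≤ y ≤ n} is (after translating down by m) a totally even edge set of the m × (n−m) grid. -/

import Mathlib

namespace Slitherlink

/-- Vertices of grids: integer points of the plane. -/
abbrev V : Type := ℤ × ℤ

/-- Edges: unordered pairs of vertices. -/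
abbrev Edge : Type := Sym2 V

/-- `p` is a vertex of the `m × n` grid. -/
def gridVertex (m n : ℤ) (p : V) : Prop :=
  1 ≤ p.1 ∧ p.1 ≤ m ∧ 1 ≤ p.2 ∧ p.2 ≤ n

/-- `e` is an edge of the `m × n` grid: a unit segment between grid vertices. -/
def gridEdge (m n : ℤ) (e : Edge) : Prop :=
  ∃ p q : V, e = s(p, q) ∧ gridVertex m n p ∧ gridVertex m n q ∧
    ((q.1 = p.1 + 1 ∧ q.2 = p.2) ∨ (q.1 = p.1 ∧ q.2 = p.2 + 1))

/-- The four boundary edges of the unit cell with lower-left corner `(a, b)`. -/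
def cellEdges (a b : ℤ) : Set Edge :=
  {s((a, b), (a + 1, b)), s((a, b), (a, b + 1)),
   s((a + 1, b), (a + 1, b + 1)), s((a, b + 1), (a + 1, b + 1))}

/-- `(a, b)` is the lower-left corner of a cell of the `m × n` grid. -/
def isCell (m n a b : ℤ) : Prop := 1 ≤ a ∧ a + 1 ≤ m ∧ 1 ≤ b ∧ b + 1 ≤ n

/-- Number of edges of `E` incident with the vertex `p`. -/
noncomputable def degree (E : Set Edge) (p : V) : ℕ := {e ∈ E | p ∈ e}.ncard

/-- Number of edges of `E` among the four boundary edges of the cell at `(a, b)`. -/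
noncomputable def cellCount (E : Set Edge) (a b : ℤ) : ℕ := (E ∩ cellEdges a b).ncard

/-- A set of edges of the `m × n` grid is totally even if every vertex is incident with an
even number of its edges and every cell contains an even number of its edges. -/
def TotallyEven (m n : ℤ) (E : Set Edge) : Prop :=
  (∀ e ∈ E, gridEdge m n e) ∧
  (∀ p : V, Even (degree E p)) ∧
  (∀ a b : ℤ, isCell m n a b → Even (cellCount E a b))

/-- The graph on `V` whose edges are the members of `C`. -/
def cycleGraph (C : Set Edge) : SimpleGraph V where
  Adj p q := p ≠ q ∧ s(p, q) ∈ C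
  symm := by
    constructor
    intro p q h
    refine ⟨h.1.symm, ?_⟩
    rw [Sym2.eq_swap]
    exact h.2
  loopless := by constructor; intro p h; exact h.1 rfl

/-- `C` is a cycle in the `m × n` grid: a nonempty connected 2-regular subgraph. -/
def IsCycle (m n : ℤ) (C : Set Edge) : Prop :=
  C.Nonempty ∧ (∀ e ∈ C, gridEdge m n e) ∧
  (∀ p : V, degree C p = 0 ∨ degree C p = 2) ∧
  (∀ p q : V, (∃ e ∈ C, p ∈ e) → (∃ e ∈ C, q ∈ e) → (cycleGraph C).Reachable p q)

/-- Two edge sets have the same signature on the `m × n` grid. -/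
def SameSignature (m n : ℤ) (C₁ C₂ : Set Edge) : Prop :=
  ∀ a b : ℤ, isCell m n a b → cellCount C₁ a b = cellCount C₂ a b

/-- Membership in the closed diamond `D(i)` of the `n × n` grid. -/
def inDiamond (n i : ℤ) (p : V) : Prop :=
  i + 1 ≤ p.1 + p.2 ∧ p.1 + p.2 ≤ 2 * n - i + 1 ∧ -i ≤ p.1 - p.2 ∧ p.1 - p.2 ≤ i

/-- The diamond edge set `B(i)`: all edges of the `n × n` grid contained in `D(i)`. -/
def diamondSet (n i : ℤ) : Set Edge :=
  {e | gridEdge n n e ∧ ∀ p ∈ e, inDiamond n i p}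

/-- The symmetric difference of two edge sets. -/
def sdiff (A B : Set Edge) : Set Edge := (A \ B) ∪ (B \ A)


-- ===== new material =====

open Classical in
noncomputable def ind (E : Set Edge) (e : Edge) : ZMod 2 := if e ∈ E then 1 else 0

noncomputable def r (E : Set Edge) (x y : ℤ) : ZMod 2 := ind E s((x, y), (x + 1, y))
noncomputable def u (E : Set Edge) (x y : ℤ) : ZMod 2 := ind E s((x, y), (x, y + 1))

lemma even_cast {k : ℕ} (h : Even k) : (k : ZMod 2) = 0 := by
  obtain ⟨j, rfl⟩ := h
  push_cast
  rw [← two_mul, show (2 : ZMod 2) = 0 from rfl, zero_mul]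

lemma inter_insert_ncard (E : Set Edge) (a : Edge) (s : Set Edge) (hs : s.Finite)
    (ha : a ∉ s) :
    ((E ∩ insert a s).ncard : ZMod 2) = ind E a + ((E ∩ s).ncard : ZMod 2) := by
  by_cases h : a ∈ E
  · have h1 : E ∩ insert a s = insert a (E ∩ s) := by
      ext e
      simp only [Set.mem_inter_iff, Set.mem_insert_iff]
      constructor
      · rintro ⟨he, rfl | hes⟩
        · exact Or.inl rfl
        · exact Or.inr ⟨he, hes⟩
      · rintro (rfl | ⟨he, hes⟩)
        · exact ⟨h, Or.inl rfl⟩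
        · exact ⟨he, Or.inr hes⟩
    rw [h1, Set.ncard_insert_of_notMem (fun hc => ha hc.2) (hs.inter_of_right E)]
    push_cast
    simp only [ind, if_pos h]
    ring
  · have h1 : E ∩ insert a s = E ∩ s := by
      ext e
      simp only [Set.mem_inter_iff, Set.mem_insert_iff]
      constructor
      · rintro ⟨he, rfl | hes⟩
        · exact absurd he h
        · exact ⟨he, hes⟩
      · rintro ⟨he, hes⟩
        exact ⟨he, Or.inr hes⟩
    rw [h1]
    simp only [ind, if_neg h, zero_add]

lemma ncard_inter_four (E : Set Edge) (a b c d : Edge)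
    (hab : a ≠ b) (hac : a ≠ c) (had : a ≠ d) (hbc : b ≠ c) (hbd : b ≠ d) (hcd : c ≠ d) :
    ((E ∩ {a, b, c, d}).ncard : ZMod 2) = ind E a + ind E b + ind E c + ind E d := by
  have fd : ({d} : Set Edge).Finite := Set.finite_singleton d
  have fcd : ({c, d} : Set Edge).Finite := fd.insert c
  have fbcd : ({b, c, d} : Set Edge).Finite := fcd.insert b
  rw [inter_insert_ncard E a _ fbcd (by simp [hab, hac, had]),
    inter_insert_ncard E b _ fcd (by simp [hbc, hbd]),
    inter_insert_ncard E c _ fd (by simp [hcd]),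
    show ({d} : Set Edge) = insert d ∅ by simp,
    inter_insert_ncard E d _ (Set.finite_empty) (by simp)]
  simp only [Set.inter_empty, Set.ncard_empty, Nat.cast_zero, add_zero]
  ring

section Main

variable {m n : ℤ} {E : Set Edge}

set_option maxHeartbeats 1000000 in
lemma incident_eq (hE : TotallyEven m n E) (x y : ℤ) :
    {e ∈ E | ((x, y) : V) ∈ e} =
      E ∩ {s((x-1, y), (x, y)), s((x, y), (x+1, y)), s((x, y-1), (x, y)), s((x, y), (x, y+1))} := by
  ext e
  simp only [Set.mem_setOf_eq, Set.mem_inter_iff, Set.mem_insert_iff, Set.mem_singleton_iff]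
  constructor
  · rintro ⟨he, hpe⟩
    refine ⟨he, ?_⟩
    obtain ⟨p, q, rfl, hp, hq, hadj⟩ := hE.1 _ he
    obtain ⟨p1, p2⟩ := p
    obtain ⟨q1, q2⟩ := q
    rw [Sym2.mem_iff] at hpe
    simp only [Prod.mk.injEq] at hpe hadj
    rcases hadj with ⟨h3, h4⟩ | ⟨h3, h4⟩ <;> rcases hpe with ⟨h1, h2⟩ | ⟨h1, h2⟩
    · exact Or.inr (Or.inl (by simp only [Sym2.eq_iff, Prod.mk.injEq]; omega))
    · exact Or.inl (by simp only [Sym2.eq_iff, Prod.mk.injEq]; omega)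
    · exact Or.inr (Or.inr (Or.inr (by simp only [Sym2.eq_iff, Prod.mk.injEq]; omega)))
    · exact Or.inr (Or.inr (Or.inl (by simp only [Sym2.eq_iff, Prod.mk.injEq]; omega)))
  · rintro ⟨he, rfl | rfl | rfl | rfl⟩ <;>
      simp [Sym2.mem_iff, he]

lemma vertex_rel (hE : TotallyEven m n E) (x y : ℤ) :
    r E (x-1) y + r E x y + u E x (y-1) + u E x y = 0 := by
  have h4 := hE.2.1 ((x, y) : V)
  rw [degree] at h4
  have hc := even_cast h4
  rw [incident_eq hE x y] at hc
  have hW : r E (x-1) y = ind E s((x-1, y), (x, y)) := by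
    rw [r, show x - 1 + 1 = x from by ring]
  have hS : u E x (y-1) = ind E s((x, y-1), (x, y)) := by
    rw [u, show y - 1 + 1 = y from by ring]
  rw [hW, hS, r, u]
  rw [ncard_inter_four] at hc
  · exact hc
  all_goals (simp only [ne_eq, Sym2.eq_iff, Prod.mk.injEq]; omega)

lemma cell_rel (hE : TotallyEven m n E) {a b : ℤ} (h : isCell m n a b) :
    r E a b + u E a b + u E (a+1) b + r E a (b+1) = 0 := by
  have h4 := hE.2.2 a b h
  rw [cellCount] at h4
  have hc := even_cast h4
  rw [cellEdges, ncard_inter_four] at hc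
  · rw [r, u, u, r]; exact hc
  all_goals (simp only [ne_eq, Sym2.eq_iff, Prod.mk.injEq]; omega)

lemma vert_bounds (hE : TotallyEven m n E) {x y : ℤ} (h : s(((x:ℤ), (y:ℤ)), (x, y+1)) ∈ E) :
    1 ≤ x ∧ x ≤ m ∧ 1 ≤ y ∧ y + 1 ≤ n := by
  obtain ⟨p, q, heq, hp, hq, hadj⟩ := hE.1 _ h
  obtain ⟨p1, p2⟩ := p
  obtain ⟨q1, q2⟩ := q
  rw [Sym2.eq_iff] at heq
  obtain ⟨hp1, hp2, hp3, hp4⟩ := hp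
  obtain ⟨hq1, hq2, hq3, hq4⟩ := hq
  simp only [Prod.mk.injEq] at heq hadj hp1 hp2 hp3 hp4 hq1 hq2 hq3 hq4
  omega

lemma horiz_bounds (hE : TotallyEven m n E) {x y : ℤ} (h : s(((x:ℤ), (y:ℤ)), (x+1, y)) ∈ E) :
    1 ≤ x ∧ x + 1 ≤ m ∧ 1 ≤ y ∧ y ≤ n := by
  obtain ⟨p, q, heq, hp, hq, hadj⟩ := hE.1 _ h
  obtain ⟨p1, p2⟩ := p
  obtain ⟨q1, q2⟩ := q
  rw [Sym2.eq_iff] at heq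
  obtain ⟨hp1, hp2, hp3, hp4⟩ := hp
  obtain ⟨hq1, hq2, hq3, hq4⟩ := hq
  simp only [Prod.mk.injEq] at heq hadj hp1 hp2 hp3 hp4 hq1 hq2 hq3 hq4
  omega

lemma u_zero (hE : TotallyEven m n E) {x y : ℤ} (h : x < 1 ∨ m < x ∨ y < 1 ∨ n < y + 1) :
    u E x y = 0 := by
  rw [u, ind, if_neg]
  intro hc
  have := vert_bounds hE hc
  omega

lemma r_zero (hE : TotallyEven m n E) {x y : ℤ} (h : x < 1 ∨ m < x + 1 ∨ y < 1 ∨ n < y) :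
    r E x y = 0 := by
  rw [r, ind, if_neg]
  intro hc
  have := horiz_bounds hE hc
  omega

-- ZMod 2 helpers
lemma z_ne_step : ∀ a b c d e f : ZMod 2,
    a + c + d + b = 0 → b + e + d + f = 0 → e + f = a + c := by decide

lemma z_se_step : ∀ b G H I e D : ZMod 2,
    b + G + H + I = 0 → b + e + D + H = 0 → e + D = I + G := by decide

lemma z_ne_sw : ∀ A B C D : ZMod 2, A + B + C + D = 0 → B + D = A + C := by decide

lemma z_nw_se : ∀ A B C D : ZMod 2, A + B + C + D = 0 → A + D = B + C := by decide

lemma z_cancel : ∀ a b c : ZMod 2, a + b = c + c → b = a := by decide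

lemma z_sum : ∀ a b c D : ZMod 2, a + c = D → b + c = a + b + D := by decide

noncomputable def dne (E : Set Edge) (x y : ℤ) : ZMod 2 := r E x y + u E x y
noncomputable def dse (E : Set Edge) (x y : ℤ) : ZMod 2 := r E x y + u E x (y-1)

lemma dne_step (hE : TotallyEven m n E) {x y : ℤ}
    (hx : 2 ≤ x) (hx' : x ≤ m) (hy : 2 ≤ y) (hy' : y ≤ n) :
    dne E x y = dne E (x-1) (y-1) := by
  have hc := cell_rel hE (a := x-1) (b := y-1) ⟨by omega, by omega, by omega, by omega⟩
  rw [show x - 1 + 1 = x from by ring, show y - 1 + 1 = y from by ring] at hc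
  have hv := vertex_rel hE x y
  exact z_ne_step _ _ _ _ _ _ hc hv

lemma dse_step (hE : TotallyEven m n E) {x y : ℤ}
    (hx : 2 ≤ x) (hx' : x ≤ m) (hy : 1 ≤ y) (hy' : y + 1 ≤ n) :
    dse E x y = dse E (x-1) (y+1) := by
  have hc := cell_rel hE (a := x-1) (b := y) ⟨by omega, by omega, by omega, by omega⟩
  rw [show x - 1 + 1 = x from by ring] at hc
  have hv := vertex_rel hE x y
  rw [dse, dse, show y + 1 - 1 = y from by ring]
  exact z_se_step _ _ _ _ _ _ hc hv

lemma dne_sw (hE : TotallyEven m n E) (x y : ℤ) :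
    dne E x y = r E (x-1) y + u E x (y-1) :=
  z_ne_sw _ _ _ _ (vertex_rel hE x y)

lemma nw_se (hE : TotallyEven m n E) (x y : ℤ) :
    r E (x-1) y + u E x y = dse E x y :=
  z_nw_se _ _ _ _ (vertex_rel hE x y)

lemma dne_chain (hE : TotallyEven m n E) (k : ℕ) :
    ∀ x y : ℤ, 1 ≤ x → x + k ≤ m → 1 ≤ y → y + k ≤ n →
      dne E (x + k) (y + k) = dne E x y := by
  induction k with
  | zero => intro x y _ _ _ _; norm_num
  | succ k ih =>
    intro x y h1 h2 h3 h4
    push_cast at h2 h4 ⊢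
    rw [show x + ((k : ℤ) + 1) = (x + 1) + k from by ring,
      show y + ((k : ℤ) + 1) = (y + 1) + k from by ring,
      ih (x+1) (y+1) (by omega) (by omega) (by omega) (by omega)]
    have := dne_step hE (x := x+1) (y := y+1) (by omega) (by omega) (by omega) (by omega)
    rw [show x + 1 - 1 = x from by ring, show y + 1 - 1 = y from by ring] at this
    exact this

lemma dse_chain (hE : TotallyEven m n E) (k : ℕ) :
    ∀ x y : ℤ, 1 ≤ x → x + k ≤ m → 1 ≤ y - k → y ≤ n →
      dse E (x + k) (y - k) = dse E x y := by
  induction k with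
  | zero => intro x y _ _ _ _; norm_num
  | succ k ih =>
    intro x y h1 h2 h3 h4
    push_cast at h2 h3 ⊢
    rw [show x + ((k : ℤ) + 1) = (x + 1) + k from by ring,
      show y - ((k : ℤ) + 1) = (y - 1) - k from by ring,
      ih (x+1) (y-1) (by omega) (by omega) (by omega) (by omega)]
    have := dse_step hE (x := x+1) (y := y-1) (by omega) (by omega) (by omega) (by omega)
    rw [show x + 1 - 1 = x from by ring, show y - 1 + 1 = y from by ring] at this
    exact this

lemma dne_left (hE : TotallyEven m n E) (y : ℤ) : dne E 1 y = u E 1 (y-1) := by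
  rw [dne_sw hE, show (1:ℤ) - 1 = 0 from by ring,
    r_zero hE (Or.inl (by omega)), zero_add]

lemma dne_bottom (hE : TotallyEven m n E) (x : ℤ) : dne E x 1 = r E (x-1) 1 := by
  rw [dne_sw hE, show (1:ℤ) - 1 = 0 from by ring,
    u_zero hE (Or.inr (Or.inr (Or.inl (by omega)))), add_zero]

lemma dne_right (hE : TotallyEven m n E) (y : ℤ) : dne E m y = u E m y := by
  rw [dne, r_zero hE (Or.inr (Or.inl (by omega))), zero_add]

lemma dse_right (hE : TotallyEven m n E) (y : ℤ) : dse E m y = u E m (y-1) := by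
  rw [dse, r_zero hE (Or.inr (Or.inl (by omega))), zero_add]

lemma dse_bottom (hE : TotallyEven m n E) (x : ℤ) : dse E x 1 = r E x 1 := by
  rw [dse, show (1:ℤ) - 1 = 0 from by ring,
    u_zero hE (Or.inr (Or.inr (Or.inl (by omega)))), add_zero]

lemma u_left_dse (hE : TotallyEven m n E) (y : ℤ) : u E 1 y = dse E 1 y := by
  have := nw_se hE 1 y
  rw [show (1:ℤ) - 1 = 0 from by ring, r_zero hE (Or.inl (by omega)), zero_add] at this
  exact this

lemma crossing_base (hE : TotallyEven m n E) (hm : 0 < m) (hmn : m < n) :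
    u E 1 m = 0 := by
  obtain ⟨k, hk⟩ : ∃ k : ℕ, (k : ℤ) = m - 1 := ⟨(m-1).toNat, Int.toNat_of_nonneg (by omega)⟩
  have h2 := dse_chain hE k 1 m (by omega) (by omega) (by omega) (by omega)
  rw [show (1:ℤ) + k = m from by omega, show m - (k:ℤ) = 1 from by omega] at h2
  rw [u_left_dse hE, ← h2, dse_bottom hE, r_zero hE (Or.inr (Or.inl (by omega)))]

lemma crossing_step (hE : TotallyEven m n E) (hm : 0 < m) (hmn : m < n)
    {x : ℤ} (hx1 : 1 ≤ x) (hx2 : x ≤ m - 1) :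
    u E (x+1) m = u E x m := by
  have hv := nw_se hE (x+1) m
  rw [show x + 1 - 1 = x from by ring] at hv
  -- hv : r E x m + u E (x+1) m = dse E (x+1) m
  have key : u E x m + u E (x+1) m = dne E x m + dse E (x+1) m := by
    rw [dne]
    exact z_sum _ _ _ _ hv
  have h1 : dne E x m = r E (m-x) 1 := by
    obtain ⟨k, hk⟩ : ∃ k : ℕ, (k : ℤ) = x - 1 := ⟨(x-1).toNat, Int.toNat_of_nonneg (by omega)⟩
    have hc := dne_chain hE k 1 (m-x+1) (by omega) (by omega) (by omega) (by omega)
    rw [show (1:ℤ) + k = x from by omega, show m - x + 1 + (k:ℤ) = m from by omega] at hc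
    obtain ⟨j, hj⟩ : ∃ j : ℕ, (j : ℤ) = m - x - 1 := ⟨(m-x-1).toNat, Int.toNat_of_nonneg (by omega)⟩
    have hd := dse_chain hE j 1 (m-x) (by omega) (by omega) (by omega) (by omega)
    rw [show (1:ℤ) + j = m - x from by omega, show m - x - (j:ℤ) = 1 from by omega] at hd
    rw [hc, dne_left hE, show m - x + 1 - 1 = m - x from by ring,
      u_left_dse hE, ← hd, dse_bottom hE]
  have h2 : dse E (x+1) m = r E (m-x) 1 := by
    obtain ⟨k, hk⟩ : ∃ k : ℕ, (k : ℤ) = m - x - 1 := ⟨(m-x-1).toNat, Int.toNat_of_nonneg (by omega)⟩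
    have hc := dse_chain hE k (x+1) m (by omega) (by omega) (by omega) (by omega)
    rw [show x + 1 + (k:ℤ) = m from by omega, show m - (k:ℤ) = x + 1 from by omega] at hc
    obtain ⟨j, hj⟩ : ∃ j : ℕ, (j : ℤ) = x - 1 := ⟨(x-1).toNat, Int.toNat_of_nonneg (by omega)⟩
    have hd := dne_chain hE j (m-x+1) 1 (by omega) (by omega) (by omega) (by omega)
    rw [show m - x + 1 + (j:ℤ) = m from by omega, show (1:ℤ) + j = x from by omega] at hd
    rw [← hc, dse_right hE, show x + 1 - 1 = x from by ring, ← dne_right hE, hd,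
      dne_bottom hE, show m - x + 1 - 1 = m - x from by ring]
  rw [h1, h2] at key
  exact z_cancel _ _ _ key

lemma crossing_all (hE : TotallyEven m n E) (hm : 0 < m) (hmn : m < n) :
    ∀ x : ℤ, 1 ≤ x → x ≤ m → u E x m = 0 := by
  intro x hx
  refine Int.le_induction (m := 1) (motive := fun z _ => z ≤ m → u E z m = 0) ?_ ?_ x hx
  · intro _
    exact crossing_base hE hm hmn
  · intro y hy ih hym
    rw [crossing_step hE hm hmn hy (by omega)]
    exact ih (by omega)

lemma no_crossing (hE : TotallyEven m n E) (hm : 0 < m) (hmn : m < n) :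
    ∀ x : ℤ, s(((x:ℤ), m), (x, m + 1)) ∉ E := by
  intro x h
  have hb := vert_bounds hE h
  have h0 := crossing_all hE hm hmn x hb.1 hb.2.1
  rw [u, ind, if_pos h] at h0
  exact one_ne_zero h0

-- ===== Part 2 : restriction to the lower subgrid =====

lemma low_incident (hE : TotallyEven m n E) (hcr : ∀ x : ℤ, s(((x:ℤ), m), (x, m + 1)) ∉ E)
    {p : V} (hp : p.2 ≤ m) :
    {e ∈ {e ∈ E | ∀ q ∈ e, q.2 ≤ m} | p ∈ e} = {e ∈ E | p ∈ e} := by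
  ext e
  simp only [Set.mem_setOf_eq]
  constructor
  · rintro ⟨⟨he, _⟩, hpe⟩
    exact ⟨he, hpe⟩
  · rintro ⟨he, hpe⟩
    refine ⟨⟨he, ?_⟩, hpe⟩
    intro q hq
    obtain ⟨a, b, rfl, ha, hb, hadj⟩ := hE.1 _ he
    obtain ⟨a1, a2⟩ := a
    obtain ⟨b1, b2⟩ := b
    obtain ⟨p1, p2⟩ := p
    obtain ⟨q1, q2⟩ := q
    rw [Sym2.mem_iff] at hq hpe
    have hp2 : p2 ≤ m := hp
    simp only [Prod.mk.injEq] at hq hpe hadj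
    show q2 ≤ m
    rcases hadj with ⟨h3, h4⟩ | ⟨h3, h4⟩
    · omega
    · by_cases hc2 : a2 + 1 ≤ m
      · omega
      · exfalso
        apply hcr a1
        have heq : s(((a1:ℤ), m), (a1, m + 1)) = s(((a1:ℤ), a2), (b1, b2)) := by
          rw [Sym2.eq_iff]
          simp only [Prod.mk.injEq, eq_self_iff_true, true_and, and_true]
          omega
        rw [heq]
        exact he

lemma low_totallyEven (hE : TotallyEven m n E) (hm : 0 < m) (hmn : m < n)
    (hcr : ∀ x : ℤ, s(((x:ℤ), m), (x, m + 1)) ∉ E) :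
    TotallyEven m m {e ∈ E | ∀ q ∈ e, q.2 ≤ m} := by
  refine ⟨?_, ?_, ?_⟩
  · rintro e ⟨he, hq⟩
    obtain ⟨p, q, rfl, hp', hq', hadj⟩ := hE.1 _ he
    exact ⟨p, q, rfl, ⟨hp'.1, hp'.2.1, hp'.2.2.1, hq p (Sym2.mem_mk_left p q)⟩,
      ⟨hq'.1, hq'.2.1, hq'.2.2.1, hq q (Sym2.mem_mk_right p q)⟩, hadj⟩
  · intro p
    by_cases hp : p.2 ≤ m
    · rw [degree, low_incident hE hcr hp]
      have := hE.2.1 p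
      rwa [degree] at this
    · have hempty : {e ∈ {e ∈ E | ∀ q ∈ e, q.2 ≤ m} | p ∈ e} = ∅ := by
        ext e
        simp only [Set.mem_setOf_eq, Set.mem_empty_iff_false, iff_false, not_and]
        rintro ⟨_, hq⟩ hpe
        exact hp (hq p hpe)
      rw [degree, hempty, Set.ncard_empty]
      exact Even.zero
  · intro a b hab
    obtain ⟨ha1, ha2, ha3, ha4⟩ := hab
    have hcell : {e ∈ E | ∀ q ∈ e, q.2 ≤ m} ∩ cellEdges a b = E ∩ cellEdges a b := by
      ext e
      simp only [Set.mem_inter_iff, Set.mem_setOf_eq]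
      constructor
      · rintro ⟨⟨he, _⟩, hce⟩
        exact ⟨he, hce⟩
      · rintro ⟨he, hce⟩
        refine ⟨⟨he, ?_⟩, hce⟩
        intro q hq
        rw [cellEdges] at hce
        simp only [Set.mem_insert_iff, Set.mem_singleton_iff] at hce
        obtain ⟨q1, q2⟩ := q
        rcases hce with rfl | rfl | rfl | rfl <;>
          (rw [Sym2.mem_iff] at hq; simp only [Prod.mk.injEq] at hq; show q2 ≤ m; omega)
    rw [cellCount, hcell]
    have := hE.2.2 a b ⟨ha1, by omega, ha3, by omega⟩
    rwa [cellCount] at this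

-- ===== Part 3 : restriction to the upper subgrid =====

lemma high_incident (hE : TotallyEven m n E) (hcr : ∀ x : ℤ, s(((x:ℤ), m), (x, m + 1)) ∉ E)
    {p : V} (hp : m + 1 ≤ p.2) :
    {e ∈ {e ∈ E | ∀ q ∈ e, m + 1 ≤ q.2} | p ∈ e} = {e ∈ E | p ∈ e} := by
  ext e
  simp only [Set.mem_setOf_eq]
  constructor
  · rintro ⟨⟨he, _⟩, hpe⟩
    exact ⟨he, hpe⟩
  · rintro ⟨he, hpe⟩
    refine ⟨⟨he, ?_⟩, hpe⟩
    intro q hq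
    obtain ⟨a, b, rfl, ha, hb, hadj⟩ := hE.1 _ he
    obtain ⟨a1, a2⟩ := a
    obtain ⟨b1, b2⟩ := b
    obtain ⟨p1, p2⟩ := p
    obtain ⟨q1, q2⟩ := q
    rw [Sym2.mem_iff] at hq hpe
    have hp2 : m + 1 ≤ p2 := hp
    simp only [Prod.mk.injEq] at hq hpe hadj
    show m + 1 ≤ q2
    rcases hadj with ⟨h3, h4⟩ | ⟨h3, h4⟩
    · omega
    · by_cases hc2 : m + 1 ≤ a2
      · omega
      · exfalso
        apply hcr a1
        have heq : s(((a1:ℤ), m), (a1, m + 1)) = s(((a1:ℤ), a2), (b1, b2)) := by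
          rw [Sym2.eq_iff]
          simp only [Prod.mk.injEq, eq_self_iff_true, true_and, and_true]
          omega
        rw [heq]
        exact he

lemma fdown_inj (m : ℤ) : Function.Injective (fun p : V => ((p.1, p.2 - m) : V)) := by
  intro a b hab
  obtain ⟨a1, a2⟩ := a
  obtain ⟨b1, b2⟩ := b
  simp only [Prod.mk.injEq] at hab ⊢
  omega

lemma mem_map_fdown {p : V} {e : Edge} :
    p ∈ Sym2.map (fun p : V => ((p.1, p.2 - m) : V)) e ↔ ((p.1, p.2 + m) : V) ∈ e := by
  rw [Sym2.mem_map]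
  constructor
  · rintro ⟨a, ha, rfl⟩
    obtain ⟨a1, a2⟩ := a
    simpa using ha
  · intro h
    refine ⟨(p.1, p.2 + m), h, ?_⟩
    obtain ⟨p1, p2⟩ := p
    simp

lemma high_totallyEven (hE : TotallyEven m n E) (hm : 0 < m) (hmn : m < n)
    (hcr : ∀ x : ℤ, s(((x:ℤ), m), (x, m + 1)) ∉ E) :
    TotallyEven m (n - m)
      (Sym2.map (fun p : V => ((p.1, p.2 - m) : V)) '' {e ∈ E | ∀ q ∈ e, m + 1 ≤ q.2}) := by
  set f : V → V := fun p : V => ((p.1, p.2 - m) : V) with hf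
  refine ⟨?_, ?_, ?_⟩
  · rintro e' ⟨e, ⟨he, hq⟩, rfl⟩
    obtain ⟨p, q, rfl, hp', hq', hadj⟩ := hE.1 _ he
    have h1 := hq p (Sym2.mem_mk_left p q)
    have h2 := hq q (Sym2.mem_mk_right p q)
    refine ⟨f p, f q, Sym2.map_pair_eq f p q, ⟨hp'.1, hp'.2.1, ?_, ?_⟩,
      ⟨hq'.1, hq'.2.1, ?_, ?_⟩, ?_⟩
    · simp only [hf]; omega
    · have := hp'.2.2.2; simp only [hf]; omega
    · simp only [hf]; omega
    · have := hq'.2.2.2; simp only [hf]; omega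
    · rcases hadj with ⟨h3, h4⟩ | ⟨h3, h4⟩
      · left; constructor <;> simp only [hf] <;> omega
      · right; constructor <;> simp only [hf] <;> omega
  · intro p
    have himg : {e ∈ Sym2.map f '' {e ∈ E | ∀ q ∈ e, m + 1 ≤ q.2} | p ∈ e} =
        Sym2.map f '' {e ∈ {e ∈ E | ∀ q ∈ e, m + 1 ≤ q.2} | ((p.1, p.2 + m) : V) ∈ e} := by
      ext e'
      simp only [Set.mem_setOf_eq, Set.mem_image]
      constructor
      · rintro ⟨⟨e, he, rfl⟩, hpe⟩
        exact ⟨e, ⟨he, mem_map_fdown.mp hpe⟩, rfl⟩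
      · rintro ⟨e, ⟨he, hpe⟩, rfl⟩
        exact ⟨⟨e, he, rfl⟩, mem_map_fdown.mpr hpe⟩
    rw [degree, himg, Set.ncard_image_of_injective _ (Sym2.map.injective (fdown_inj m))]
    by_cases hp : m + 1 ≤ p.2 + m
    · rw [high_incident hE hcr (p := (p.1, p.2 + m)) hp]
      have := hE.2.1 ((p.1, p.2 + m) : V)
      rwa [degree] at this
    · have hempty : {e ∈ {e ∈ E | ∀ q ∈ e, m + 1 ≤ q.2} | ((p.1, p.2 + m) : V) ∈ e} = ∅ := by
        ext e
        simp only [Set.mem_setOf_eq, Set.mem_empty_iff_false, iff_false, not_and]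
        rintro ⟨_, hq⟩ hpe
        exact hp (hq _ hpe)
      rw [hempty, Set.ncard_empty]
      exact Even.zero
  · intro a b hab
    obtain ⟨ha1, ha2, ha3, ha4⟩ := hab
    have himg : (Sym2.map f '' {e ∈ E | ∀ q ∈ e, m + 1 ≤ q.2}) ∩ cellEdges a b =
        Sym2.map f '' (E ∩ cellEdges a (b + m)) := by
      have hmap : ∀ x y x' y' : ℤ, Sym2.map f s(((x:ℤ), y), (x', y')) = s(((x:ℤ), y - m), (x', y' - m)) := by
        intro x y x' y'
        rw [Sym2.map_pair_eq]
      ext e'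
      simp only [Set.mem_inter_iff, Set.mem_image, Set.mem_setOf_eq, cellEdges,
        Set.mem_insert_iff, Set.mem_singleton_iff]
      constructor
      · rintro ⟨⟨e, ⟨he, hq⟩, rfl⟩, hce⟩
        refine ⟨e, ⟨he, ?_⟩, rfl⟩
        have hinj := Sym2.map.injective (fdown_inj m)
        rcases hce with h | h | h | h
        · have : e = s(((a:ℤ), b + m), (a + 1, b + m)) := by
            apply hinj; rw [h, hmap]; congr 1 <;> simp <;> ring
          rw [this]; left; rfl
        · have : e = s(((a:ℤ), b + m), (a, b + m + 1)) := by
            apply hinj; rw [h, hmap]; congr 1 <;> simp <;> ring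
          rw [this]; right; left; congr 1 <;> simp <;> ring
        · have : e = s(((a + 1 :ℤ), b + m), (a + 1, b + m + 1)) := by
            apply hinj; rw [h, hmap]; congr 1 <;> simp <;> ring
          rw [this]; right; right; left; congr 1 <;> simp <;> ring
        · have : e = s(((a:ℤ), b + m + 1), (a + 1, b + m + 1)) := by
            apply hinj; rw [h, hmap]; congr 1 <;> simp <;> ring
          rw [this]; right; right; right; congr 1 <;> simp <;> ring
      · rintro ⟨e, ⟨he, hce⟩, rfl⟩
        constructor
        · refine ⟨e, ⟨he, ?_⟩, rfl⟩
          intro q hq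
          obtain ⟨q1, q2⟩ := q
          rcases hce with rfl | rfl | rfl | rfl <;>
            (rw [Sym2.mem_iff] at hq; simp only [Prod.mk.injEq] at hq; show m + 1 ≤ q2; omega)
        · rcases hce with rfl | rfl | rfl | rfl
          · left; rw [hmap]; congr 1 <;> simp <;> ring
          · right; left; rw [hmap]; congr 1 <;> simp <;> ring
          · right; right; left; rw [hmap]; congr 1 <;> simp <;> ring
          · right; right; right; rw [hmap]; congr 1 <;> simp <;> ring
    rw [cellCount, himg, Set.ncard_image_of_injective _ (Sym2.map.injective (fdown_inj m))]
    have := hE.2.2 a (b + m) ⟨ha1, by omega, by omega, by omega⟩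
    rwa [cellCount] at this

end Main

theorem stmt6 (m n : ℤ) (hm : 0 < m) (hmn : m < n) (E : Set Edge)
    (hE : TotallyEven m n E) :
    (∀ x : ℤ, s((x, m), (x, m + 1)) ∉ E) ∧
    TotallyEven m m {e ∈ E | ∀ p ∈ e, p.2 ≤ m} ∧
    TotallyEven m (n - m)
      (Sym2.map (fun p : V => (p.1, p.2 - m)) '' {e ∈ E | ∀ p ∈ e, m + 1 ≤ p.2}) := by
  have hcr := no_crossing hE hm hmn
  exact ⟨hcr, low_totallyEven hE hm hmn hcr, high_totallyEven hE hm hmn hcr⟩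

end Slitherlink
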